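/- arXiv:1009.2203 — 2 statements merged into one kernel-verified Lean document; each statement's English description precedes it below -/
import Mathlib

section
/- If a and b are Pauli operators with ω_S̃(a) < ω_S̃(b), then ω_S̃(a·b) = ω_S̃(a). -/
/-- Pauli operators on `n` qubits modulo phases, encoded symplectically:
each qubit carries an (X-part, Z-part) pair in `ZMod 2`. Multiplication is addition. -/
abbrev Pauli (n : ℕ) : Type := Fin n → ZMod 2 × ZMod 2

namespace Pauli

/-- The symplectic form encoding commutation: `0` iff the operators commute. -/
def sform {n : ℕ} (a b : Pauli n) : ZMod 2 :=
  ∑ i, ((a i).1 * (b i).2 + (a i).2 * (b i).1)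

/-- Two Pauli operators commute. -/
def PComm {n : ℕ} (a b : Pauli n) : Prop := sform a b = 0

/-- The weight of a Pauli operator: number of qubits on which it acts non-trivially. -/
def weight {n : ℕ} (a : Pauli n) : ℕ :=
  (Finset.univ.filter fun i => a i ≠ 0).card

/-- `(a,b)` is a conjugal pair in relation to the set `X`: `a` and `b` anti-commute,
and each commutes with every member of `X` other than its partner. -/
def ConjugalPair {n : ℕ} (a b : Pauli n) (X : Set (Pauli n)) : Prop :=
  ¬ PComm a b ∧ (∀ x ∈ X, x ≠ b → PComm a x) ∧ (∀ x ∈ X, x ≠ a → PComm b x)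

/-- `e` is an undetectable error with respect to `S` acting on `l`:
it commutes with all of `S` and anti-commutes with `l`. -/
def UndetError {n : ℕ} (S : Set (Pauli n)) (l e : Pauli n) : Prop :=
  (∀ s ∈ S, PComm e s) ∧ ¬ PComm e l

/-- `ω S l`: minimum weight of an undetectable error w.r.t. `S` acting on `l`. -/
noncomputable def ω {n : ℕ} (S : Set (Pauli n)) (l : Pauli n) : ℕ :=
  sInf (weight '' {e | UndetError S l e})

/-- Single-qubit Pauli X on qubit `k`. -/
def Xk {n : ℕ} (k : Fin n) : Pauli n := fun i => if i = k then (1, 0) else 0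

/-- Single-qubit Pauli Z on qubit `k`. -/
def Zk {n : ℕ} (k : Fin n) : Pauli n := fun i => if i = k then (0, 1) else 0

/-- `Pk k false = X_k`, `Pk k true = Z_k`. -/
def Pk {n : ℕ} (k : Fin n) (p : Bool) : Pauli n := if p then Zk k else Xk k

/-- A finite set of Pauli operators is independent if no member is a product of the others. -/
def IndepSet {n : ℕ} (T : Finset (Pauli n)) : Prop :=
  ∀ t ∈ T, t ∉ AddSubgroup.closure ((T.erase t : Finset (Pauli n)) : Set (Pauli n))

/-- `O` is an unimprovable set with respect to `S`. -/
def Unimprovable {n : ℕ} (S : Set (Pauli n)) (O : Finset (Pauli n)) : Prop :=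
  ∀ X ⊆ O, ∀ h : X.Nonempty, ω S (∑ x ∈ X, x) = X.inf' h (fun x => ω S x)

/-- The unimprovable set `O` extends to `Q` (with respect to `S`). -/
def ExtendsTo {n : ℕ} (S : Set (Pauli n)) (O Q : Finset (Pauli n)) : Prop :=
  ∀ R ⊆ O ∪ Q, ∀ h : (R ∩ O).Nonempty,
    ω S (∑ x ∈ R, x) ≤ (R ∩ O).inf' h (fun x => ω S x)

end Pauli

lemma sform_add_right {n : ℕ} (e a b : Pauli n) :
    Pauli.sform e (a + b) = Pauli.sform e a + Pauli.sform e b := by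
  unfold Pauli.sform
  rw [← Finset.sum_add_distrib]
  apply Finset.sum_congr rfl
  intro i _
  simp [Pi.add_apply, Prod.fst_add, Prod.snd_add]
  ring

lemma omega_le {n : ℕ} (S : Set (Pauli n)) (l e : Pauli n) (h : Pauli.UndetError S l e) :
    Pauli.ω S l ≤ Pauli.weight e :=
  Nat.sInf_le ⟨e, h, rfl⟩

lemma omega_mem {n : ℕ} (S : Set (Pauli n)) (l : Pauli n) (h : ∃ e, Pauli.UndetError S l e) :
    ∃ e, Pauli.UndetError S l e ∧ Pauli.weight e = Pauli.ω S l := by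
  obtain ⟨e, he⟩ := h
  have : Pauli.ω S l ∈ Pauli.weight '' {e | Pauli.UndetError S l e} :=
    Nat.sInf_mem ⟨Pauli.weight e, e, he, rfl⟩
  obtain ⟨f, hf, hw⟩ := this
  exact ⟨f, hf, hw⟩

/-- If ω(a) < ω(b) then ω(a·b) = ω(a). -/
theorem stmt3 {n : ℕ} (S : Set (Pauli n)) (a b : Pauli n)
    (hS : ∀ s ∈ S, ∀ s' ∈ S, Pauli.PComm s s')
    (hea : ∃ e, Pauli.UndetError S a e) (heb : ∃ e, Pauli.UndetError S b e)
    (hlt : Pauli.ω S a < Pauli.ω S b) :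
    Pauli.ω S (a + b) = Pauli.ω S a := by
  obtain ⟨e, ⟨heS, heA⟩, hwe⟩ := omega_mem S a hea
  -- e commutes with b, else ω b ≤ weight e = ω a < ω b
  have heB : Pauli.sform e b = 0 := by
    by_contra h
    have := omega_le S b e ⟨heS, h⟩
    omega
  have heAB : Pauli.UndetError S (a + b) e := by
    refine ⟨heS, ?_⟩
    unfold Pauli.PComm at *
    rw [sform_add_right, heB, add_zero]
    exact heA
  have h1 : Pauli.ω S (a + b) ≤ Pauli.ω S a := hwe ▸ omega_le S (a + b) e heAB
  obtain ⟨f, ⟨hfS, hfAB⟩, hwf⟩ := omega_mem S (a + b) ⟨e, heAB⟩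
  unfold Pauli.PComm at hfAB
  rw [sform_add_right] at hfAB
  have hfA : Pauli.sform f a ≠ 0 := by
    by_contra h
    have hfB : Pauli.sform f b ≠ 0 := by
      intro h'
      exact hfAB (by rw [h, h', add_zero])
    have := omega_le S b f ⟨hfS, hfB⟩
    omega
  have h2 : Pauli.ω S a ≤ Pauli.ω S (a + b) := hwf ▸ omega_le S a f ⟨hfS, hfA⟩
  omega
end

section
/- Let P⃗ be a choice of N logical qubits stabilized by S̃ (a sequence of conjugal pairs with first-member weights ordered and achieving the pairwise minimum). If the set of first members {p₁(P⃗ᵢ)} is an unimprovable set with respect to S̃ that extends to the set Ũ(P⃗) of all members of pairs in P⃗, then P⃗ is an optimal choice of qubits: for any other choice P⃗' with the same generated group, M_S̃(P⃗)ᵢ ≥ M_S̃(P⃗')ᵢ for all i. -/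
namespace Pauli

/-- `Ũ(P)`: all operators appearing in the pairs of `P`. -/
def UP {n : ℕ} (P : List (Pauli n × Pauli n)) : Finset (Pauli n) :=
  (P.map Prod.fst ++ P.map Prod.snd).toFinset

/-- `P` is a choice of qubits stabilized by `S`: a sequence of disjoint conjugal pairs in the
centralizer of `S`, each conjugal with respect to `S` together with all pair members, with the
first member of each pair achieving the pair minimum of ω, and the sequence of pair minima
non-decreasing. -/
def IsChoice {n : ℕ} (S : Set (Pauli n)) (P : List (Pauli n × Pauli n)) : Prop :=
  (P.map Prod.fst ++ P.map Prod.snd).Nodup ∧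
  (∀ q ∈ P, (∀ s ∈ S, PComm q.1 s) ∧ (∀ s ∈ S, PComm q.2 s)) ∧
  (∀ q ∈ P, ConjugalPair q.1 q.2 (S ∪ (UP P : Set (Pauli n)))) ∧
  (∀ q ∈ P, ω S q.1 = min (ω S q.1) (ω S q.2)) ∧
  (P.map fun q => min (ω S q.1) (ω S q.2)).Pairwise (· ≤ ·)

end Pauli

open Module Submodule

namespace LinearMap.BilinForm

variable {K V : Type*} [Field K] [AddCommGroup V] [Module K V] {B : LinearMap.BilinForm K V}

variable (B) in
def HasDualIn (s : Finset V) (D : Set V) : Prop :=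
  ∀ x ∈ s, ∃ y ∈ D, B x y = 1 ∧ ∀ z ∈ s, z ≠ x → B z y = 0

lemma apply_sum_smul_of_dual {s : Finset V} {x y : V} (hx : x ∈ s) (hxy : B x y = 1)
    (hy : ∀ z ∈ s, z ≠ x → B z y = 0) (c : V → K) : B (∑ z ∈ s, c z • z) y = c x := by
  rw [map_sum, LinearMap.sum_apply, Finset.sum_eq_single_of_mem x hx fun z hz hzx => by
    simp [hy z hz hzx]]
  simp [hxy]

lemma HasDualIn.linearIndepOn {s : Finset V} {D : Set V} (h : B.HasDualIn s D) :
    LinearIndepOn K _root_.id (s : Set V) := by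
  refine linearIndepOn_finset_iff (R := K).2 fun c hc x hx => ?_
  obtain ⟨y, -, hxy, hy⟩ := h x hx
  have hcx := apply_sum_smul_of_dual hx hxy hy c
  rwa [show ∑ z ∈ s, c z • z = 0 from hc, map_zero, LinearMap.zero_apply, eq_comm] at hcx

lemma HasDualIn.eq_zero_of_mem_span {s : Finset V} {D : Set V} (h : B.HasDualIn s D)
    {v : V} (hv : v ∈ span K (s : Set V)) (hvD : ∀ y ∈ D, B v y = 0) : v = 0 := by
  obtain ⟨c, -, rfl⟩ := mem_span_finset.1 hv
  refine Finset.sum_eq_zero fun x hx => ?_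
  obtain ⟨y, hyD, hxy, hy⟩ := h x hx
  rw [← apply_sum_smul_of_dual hx hxy hy c, hvD y hyD, zero_smul]

lemma apply_eq_zero_of_mem_span {s t : Set V} (h : ∀ x ∈ s, ∀ y ∈ t, B x y = 0)
    {v w : V} (hv : v ∈ span K s) (hw : w ∈ span K t) : B v w = 0 := by
  have hs : ∀ x ∈ s, B x w = 0 := fun x hx =>
    (span_le (p := LinearMap.ker (B x))).2 (h x hx) hw
  exact (span_le (p := LinearMap.ker (B.flip w))).2 hs hv

lemma HasDualIn.disjoint_span {s : Finset V} {D t : Set V} (hs : B.HasDualIn s D)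
    (ht : ∀ x ∈ t, ∀ y ∈ D, B x y = 0) : Disjoint (span K (s : Set V)) (span K t) := by
  refine disjoint_def.2 fun v hvs hvt => hs.eq_zero_of_mem_span hvs fun y hy => ?_
  exact apply_eq_zero_of_mem_span ht hvt (subset_span hy)

end LinearMap.BilinForm

lemma AddSubgroup.closure_eq_toAddSubgroup_span {p : ℕ} {M : Type*} [AddCommGroup M]
    [Module (ZMod p) M] (s : Set M) : closure s = (span (ZMod p) s).toAddSubgroup :=
  le_antisymm ((closure_le _).2 subset_span)
    fun _ hx => (span_le (p := toZModSubmodule p (closure s))).2 subset_closure hx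

lemma exists_subset_sum_eq_of_mem_span_zmod_two {M : Type*} [AddCommGroup M] [Module (ZMod 2) M]
    {T : Finset M} {x : M} (hx : x ∈ span (ZMod 2) (T : Set M)) :
    ∃ R ⊆ T, ∑ y ∈ R, y = x := by
  classical
  obtain ⟨c, -, rfl⟩ := mem_span_finset.1 hx
  refine ⟨T.filter (c · = 1), Finset.filter_subset _ _, ?_⟩
  rw [Finset.sum_filter]
  refine Finset.sum_congr rfl fun y _ => ?_
  rcases (by decide : ∀ z : ZMod 2, z = 0 ∨ z = 1) (c y) with h | h <;> simp [h]

namespace Pauli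

variable {n : ℕ}

lemma sform_comm (a b : Pauli n) : sform a b = sform b a := by
  unfold sform; congr 1; funext i; ring

def symp : LinearMap.BilinForm (ZMod 2) (Pauli n) :=
  LinearMap.mk₂ (ZMod 2) sform
    (fun _ _ _ => by
      simp only [sform, ← Finset.sum_add_distrib, Pi.add_apply, Prod.fst_add, Prod.snd_add]
      congr 1; funext i; ring)
    (fun _ _ _ => by
      simp only [sform, Finset.mul_sum, Pi.smul_apply, Prod.smul_fst, Prod.smul_snd, smul_eq_mul]
      congr 1; funext i; ring)
    (fun _ _ _ => by
      simp only [sform, ← Finset.sum_add_distrib, Pi.add_apply, Prod.fst_add, Prod.snd_add]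
      congr 1; funext i; ring)
    (fun _ _ _ => by
      simp only [sform, Finset.mul_sum, Pi.smul_apply, Prod.smul_fst, Prod.smul_snd, smul_eq_mul]
      congr 1; funext i; ring)

lemma symp_apply (a b : Pauli n) : symp a b = sform a b := rfl

variable {S : Set (Pauli n)} {P P' L Q : List (Pauli n × Pauli n)} {q : Pauli n × Pauli n}

/-- `m_S̃` of the paper. -/
noncomputable def pairMin (S : Set (Pauli n)) (q : Pauli n × Pauli n) : ℕ :=
  min (ω S q.1) (ω S q.2)

lemma mem_UP {x : Pauli n} : x ∈ UP P ↔ ∃ q ∈ P, q.1 = x ∨ q.2 = x := by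
  simp only [UP, List.mem_toFinset, List.mem_append, List.mem_map]
  grind

lemma UP_subset_UP (h : Q ⊆ P) : UP Q ⊆ UP P := fun x hx => by
  obtain ⟨q, hq, hx⟩ := mem_UP.1 hx
  exact mem_UP.2 ⟨q, h hq, hx⟩

lemma IsChoice.nodup_of_sublist (hP : IsChoice S P) (hL : L.Sublist P) :
    (L.map Prod.fst ++ L.map Prod.snd).Nodup :=
  hP.1.sublist ((hL.map _).append (hL.map _))

lemma IsChoice.card_UP_of_sublist (hP : IsChoice S P) (hL : L.Sublist P) :
    (UP L).card = 2 * L.length := by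
  rw [UP, List.toFinset_card_of_nodup (hP.nodup_of_sublist hL)]
  simp only [List.length_append, List.length_map]
  ring

lemma IsChoice.symp_fst_snd (hP : IsChoice S P) (hq : q ∈ P) : symp q.1 q.2 = 1 :=
  (by decide : ∀ z : ZMod 2, z ≠ 0 → z = 1) _ (hP.2.2.1 q hq).1

lemma IsChoice.symp_fst_eq_zero (hP : IsChoice S P) (hq : q ∈ P) {z : Pauli n}
    (hz : z ∈ UP P) (hne : z ≠ q.2) : symp q.1 z = 0 :=
  (hP.2.2.1 q hq).2.1 z (Or.inr hz) hne

lemma IsChoice.symp_snd_eq_zero (hP : IsChoice S P) (hq : q ∈ P) {z : Pauli n}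
    (hz : z ∈ UP P) (hne : z ≠ q.1) : symp q.2 z = 0 :=
  (hP.2.2.1 q hq).2.2 z (Or.inr hz) hne

lemma IsChoice.hasDualIn_UP (hP : IsChoice S P) (hQ : Q ⊆ P) :
    symp.HasDualIn (UP Q) (UP Q) := by
  intro x hx
  obtain ⟨q, hq, rfl | rfl⟩ := mem_UP.1 hx
  · refine ⟨q.2, mem_UP.2 ⟨q, hq, .inr rfl⟩, hP.symp_fst_snd (hQ hq), fun z hz hne => ?_⟩
    rw [symp_apply, sform_comm, ← symp_apply]
    exact hP.symp_snd_eq_zero (hQ hq) (UP_subset_UP hQ hz) hne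
  · refine ⟨q.1, mem_UP.2 ⟨q, hq, .inl rfl⟩, ?_, fun z hz hne => ?_⟩
    · rw [symp_apply, sform_comm, ← symp_apply, hP.symp_fst_snd (hQ hq)]
    · rw [symp_apply, sform_comm, ← symp_apply]
      exact hP.symp_fst_eq_zero (hQ hq) (UP_subset_UP hQ hz) hne

lemma IsChoice.finrank_span_UP (hP : IsChoice S P) :
    finrank (ZMod 2) (span (ZMod 2) (UP P : Set (Pauli n))) = 2 * P.length := by
  rw [finrank_span_finset_eq_card (hP.hasDualIn_UP (List.Subset.refl P)).linearIndepOn,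
    hP.card_UP_of_sublist (List.Sublist.refl P)]

lemma span_UP_eq_of_closure_eq (hgen : AddSubgroup.closure (UP P' : Set (Pauli n)) =
    AddSubgroup.closure (UP P : Set (Pauli n))) :
    span (ZMod 2) (UP P' : Set (Pauli n)) = span (ZMod 2) (UP P : Set (Pauli n)) := by
  rw [AddSubgroup.closure_eq_toAddSubgroup_span (p := 2),
    AddSubgroup.closure_eq_toAddSubgroup_span (p := 2)] at hgen
  exact toAddSubgroup_injective hgen

lemma IsChoice.length_eq_of_span_eq (hP : IsChoice S P) (hP' : IsChoice S P')
    (hspan : span (ZMod 2) (UP P' : Set (Pauli n)) = span (ZMod 2) (UP P : Set (Pauli n))) :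
    P.length = P'.length := by
  have h := congrArg (fun W : Submodule (ZMod 2) (Pauli n) => finrank (ZMod 2) W) hspan
  simp only [hP.finrank_span_UP, hP'.finrank_span_UP] at h
  omega

lemma IsChoice.pairMin_le_of_mem_take (hP : IsChoice S P) {i : ℕ} (hi : i < P.length)
    (hq : q ∈ P.take (i + 1)) : pairMin S q ≤ pairMin S P[i] := by
  have hsort : P.Pairwise (pairMin S · ≤ pairMin S ·) := List.pairwise_map.1 hP.2.2.2.2
  rw [List.take_add_one, List.getElem?_eq_getElem hi, Option.toList_some, List.mem_append,
    List.mem_singleton] at hq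
  rcases hq with hq | rfl
  · exact hsort.rel_of_mem_take_of_mem_drop hq
      (List.drop_eq_getElem_cons hi ▸ List.mem_cons_self)
  · exact le_rfl

lemma IsChoice.pairMin_le_of_mem_drop (hP : IsChoice S P) {i : ℕ} (hi : i < P.length)
    (hq : q ∈ P.drop i) : pairMin S P[i] ≤ pairMin S q := by
  have hsort : P.Pairwise (pairMin S · ≤ pairMin S ·) := List.pairwise_map.1 hP.2.2.2.2
  rw [List.drop_eq_getElem_cons hi, List.mem_cons] at hq
  rcases hq with rfl | hq
  · exact le_rfl
  · refine hsort.rel_of_mem_take_of_mem_drop ?_ hq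
    exact List.mem_take_iff_getElem.2 ⟨i, by omega, rfl⟩

lemma IsChoice.omega_fst_le_of_mem_take (hP : IsChoice S P) {i : ℕ} (hi : i < P.length)
    {a : Pauli n} (ha : a ∈ ((P.take (i + 1)).map Prod.fst).toFinset) :
    ω S a ≤ pairMin S P[i] := by
  obtain ⟨q, hq, rfl⟩ := List.mem_map.1 (List.mem_toFinset.1 ha)
  exact (hP.2.2.2.1 q (List.mem_of_mem_take hq)).trans_le (hP.pairMin_le_of_mem_take hi hq)

lemma IsChoice.pairMin_le_omega_of_mem_UP_drop (hP : IsChoice S P) {i : ℕ} (hi : i < P.length)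
    {x : Pauli n} (hx : x ∈ UP (P.drop i)) : pairMin S P[i] ≤ ω S x := by
  obtain ⟨q, hq, rfl | rfl⟩ := mem_UP.1 hx
  · exact (hP.pairMin_le_of_mem_drop hi hq).trans (min_le_left _ _)
  · exact (hP.pairMin_le_of_mem_drop hi hq).trans (min_le_right _ _)

lemma ExtendsTo.mem_span_sdiff {O Q O' : Finset (Pauli n)} (hext : ExtendsTo S O Q)
    (hO' : O' ⊆ O) {x : Pauli n} (hx : x ∈ span (ZMod 2) (↑(O ∪ Q) : Set (Pauli n)))
    (hlt : ∀ a ∈ O', ω S a < ω S x) :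
    x ∈ span (ZMod 2) (↑((O ∪ Q) \ O') : Set (Pauli n)) := by
  obtain ⟨R, hR, rfl⟩ := exists_subset_sum_eq_of_mem_span_zmod_two hx
  refine sum_mem fun y hy => subset_span (Finset.mem_sdiff.2 ⟨hR hy, fun hyO' => ?_⟩)
  have hyRO : y ∈ R ∩ O := Finset.mem_inter.2 ⟨hy, hO' hyO'⟩
  exact (hlt y hyO').not_ge ((hext R hR ⟨y, hyRO⟩).trans (Finset.inf'_le _ hyRO))

lemma fst_toFinset_subset_UP (hL : L ⊆ P) : (L.map Prod.fst).toFinset ⊆ UP P := fun a ha => by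
  obtain ⟨q, hq, rfl⟩ := List.mem_map.1 (List.mem_toFinset.1 ha)
  exact mem_UP.2 ⟨q, hL hq, .inl rfl⟩

lemma IsChoice.card_UP_sdiff_fst (hP : IsChoice S P) (hL : L.Sublist P) :
    (UP P \ (L.map Prod.fst).toFinset).card = 2 * P.length - L.length := by
  rw [Finset.card_sdiff_of_subset (fst_toFinset_subset_UP hL.subset),
    hP.card_UP_of_sublist (List.Sublist.refl P),
    List.toFinset_card_of_nodup (List.nodup_append.1 (hP.nodup_of_sublist hL)).1, List.length_map]

lemma IsChoice.snd_subset_UP_sdiff_fst (hP : IsChoice S P) (hL : L.Sublist P) :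
    (L.map Prod.snd).toFinset ⊆ UP P \ (L.map Prod.fst).toFinset := fun b hb => by
  obtain ⟨q, hq, rfl⟩ := List.mem_map.1 (List.mem_toFinset.1 hb)
  refine Finset.mem_sdiff.2 ⟨mem_UP.2 ⟨q, hL.subset hq, .inr rfl⟩, fun hq1 => ?_⟩
  exact List.disjoint_of_nodup_append (hP.nodup_of_sublist hL) (List.mem_toFinset.1 hq1)
    (List.mem_map_of_mem hq)

lemma IsChoice.symp_snd_eq_zero_of_mem_UP_sdiff_fst (hP : IsChoice S P) (hL : L ⊆ P)
    {b c : Pauli n} (hb : b ∈ L.map Prod.snd) (hc : c ∈ UP P \ (L.map Prod.fst).toFinset) :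
    symp b c = 0 := by
  obtain ⟨q, hq, rfl⟩ := List.mem_map.1 hb
  obtain ⟨hcP, hcL⟩ := Finset.mem_sdiff.1 hc
  refine hP.symp_snd_eq_zero (hL hq) hcP fun hcq => hcL ?_
  exact List.mem_toFinset.2 (hcq ▸ List.mem_map_of_mem hq)

lemma IsChoice.two_mul_length_add_length_le (hP : IsChoice S P) (hP' : IsChoice S P')
    (hL : L.Sublist P) (hQ : Q.Sublist P')
    (hQL : ∀ x ∈ UP Q, x ∈ span (ZMod 2) (↑(UP P \ (L.map Prod.fst).toFinset) : Set (Pauli n))) :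
    2 * Q.length + L.length ≤ 2 * P.length - L.length := by
  set C := UP P \ (L.map Prod.fst).toFinset
  set B := (L.map Prod.snd).toFinset
  have hBC : B ⊆ C := hP.snd_subset_UP_sdiff_fst hL
  have horth : ∀ b ∈ (B : Set (Pauli n)), ∀ y ∈ (UP Q : Set (Pauli n)), symp b y = 0 :=
    fun b hb y hy => symp.apply_eq_zero_of_mem_span
      (fun b hb c hc => hP.symp_snd_eq_zero_of_mem_UP_sdiff_fst hL.subset
        (List.mem_toFinset.1 hb) hc) (subset_span hb) (hQL y hy)
  have hQdual := hP'.hasDualIn_UP hQ.subset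
  have hfinQ : finrank (ZMod 2) (span (ZMod 2) (UP Q : Set (Pauli n))) = 2 * Q.length := by
    rw [finrank_span_finset_eq_card hQdual.linearIndepOn, hP'.card_UP_of_sublist hQ]
  have hfinB : finrank (ZMod 2) (span (ZMod 2) (B : Set (Pauli n))) = L.length := by
    have hBP : (B : Set (Pauli n)) ⊆ UP P := Finset.coe_subset.2 (hBC.trans Finset.sdiff_subset)
    rw [finrank_span_finset_eq_card
      ((hP.hasDualIn_UP (List.Subset.refl P)).linearIndepOn.mono hBP),
      List.toFinset_card_of_nodup (List.nodup_append.1 (hP.nodup_of_sublist hL)).2.1,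
      List.length_map]
  calc 2 * Q.length + L.length
      = finrank (ZMod 2) ↥(span (ZMod 2) (UP Q : Set (Pauli n)) ⊔ span (ZMod 2) B) := by
        rw [← hfinQ, ← hfinB, ← finrank_sup_add_finrank_inf_eq,
          (hQdual.disjoint_span horth).eq_bot, finrank_bot, add_zero]
    _ ≤ finrank (ZMod 2) (span (ZMod 2) (C : Set (Pauli n))) :=
        finrank_mono (sup_le (span_le.2 hQL) (span_mono hBC))
    _ ≤ C.card := finrank_span_finset_le_card C
    _ = 2 * P.length - L.length := hP.card_UP_sdiff_fst hL

end Pauli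

theorem stmt19_general {n : ℕ} (S : Set (Pauli n))
    (P : List (Pauli n × Pauli n)) (hP : Pauli.IsChoice S P)
    (hext : Pauli.ExtendsTo S (P.map Prod.fst).toFinset (Pauli.UP P))
    (P' : List (Pauli n × Pauli n)) (hP' : Pauli.IsChoice S P')
    (hgen : AddSubgroup.closure ((Pauli.UP P' : Finset (Pauli n)) : Set (Pauli n)) =
            AddSubgroup.closure ((Pauli.UP P : Finset (Pauli n)) : Set (Pauli n))) :
    P.length = P'.length ∧
    ∀ i (hi : i < P.length) (hi' : i < P'.length),
      min (Pauli.ω S (P'.get ⟨i, hi'⟩).1) (Pauli.ω S (P'.get ⟨i, hi'⟩).2) ≤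
      min (Pauli.ω S (P.get ⟨i, hi⟩).1) (Pauli.ω S (P.get ⟨i, hi⟩).2) := by
  have hspan := Pauli.span_UP_eq_of_closure_eq hgen
  have hlen := hP.length_eq_of_span_eq hP' hspan
  refine ⟨hlen, fun i hi hi' => ?_⟩
  by_contra! hlt
  set O' := ((P.take (i + 1)).map Prod.fst).toFinset
  have hO' : O' ⊆ (P.map Prod.fst).toFinset := fun a ha =>
    List.mem_toFinset.2 (((List.take_sublist _ _).map _).subset (List.mem_toFinset.1 ha))
  have hUP : (P.map Prod.fst).toFinset ∪ Pauli.UP P = Pauli.UP P :=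
    Finset.union_eq_right.2 (Pauli.fst_toFinset_subset_UP (List.Subset.refl P))
  have hlow : ∀ x ∈ Pauli.UP (P'.drop i),
      x ∈ span (ZMod 2) (↑(Pauli.UP P \ O') : Set (Pauli n)) := by
    intro x hx
    rw [← hUP]
    refine hext.mem_span_sdiff hO' ?_ fun a ha => (hP.omega_fst_le_of_mem_take hi ha).trans_lt
      (hlt.trans_le (hP'.pairMin_le_omega_of_mem_UP_drop hi' hx))
    rw [hUP, ← hspan]
    exact subset_span (Pauli.UP_subset_UP (List.drop_subset _ _) hx)
  have := hP.two_mul_length_add_length_le hP' (List.take_sublist _ _) (List.drop_sublist _ _) hlow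
  simp only [List.length_take, List.length_drop] at this
  omega

/-- Optimality condition.  If the first members of the pairs of a choice `P` of
logical qubits stabilized by `S` form an unimprovable set extending to all pair members, then
`P` is an optimal choice: any other choice `P'` generating the same group has the same length
and satisfies `M_S̃(P')ᵢ ≤ M_S̃(P)ᵢ` for all `i`. -/
theorem stmt19 {n : ℕ} (S : Set (Pauli n)) (hS : ∀ s ∈ S, ∀ s' ∈ S, Pauli.PComm s s')
    (P : List (Pauli n × Pauli n)) (hP : Pauli.IsChoice S P)
    (hunimp : Pauli.Unimprovable S (P.map Prod.fst).toFinset)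
    (hext : Pauli.ExtendsTo S (P.map Prod.fst).toFinset (Pauli.UP P))
    (P' : List (Pauli n × Pauli n)) (hP' : Pauli.IsChoice S P')
    (hgen : AddSubgroup.closure ((Pauli.UP P' : Finset (Pauli n)) : Set (Pauli n)) =
            AddSubgroup.closure ((Pauli.UP P : Finset (Pauli n)) : Set (Pauli n))) :
    P.length = P'.length ∧
    ∀ i (hi : i < P.length) (hi' : i < P'.length),
      min (Pauli.ω S (P'.get ⟨i, hi'⟩).1) (Pauli.ω S (P'.get ⟨i, hi'⟩).2) ≤
      min (Pauli.ω S (P.get ⟨i, hi⟩).1) (Pauli.ω S (P.get ⟨i, hi⟩).2) :=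
  stmt19_general S P hP hext P' hP' hgen
end
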